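/- Let k be a field of characteristic zero, q ∈ k \ {0,1}, and a ∈ k[h] monic of degree N > 1. In the algebra A generated by y, h, x with relations xh = qhx, hy = qyh, yx = a(h), xy = a(qh), the set {y^i h^j : i, j ≥ 0} ∪ {h^j x^k : j ≥ 0, k ≥ 1} is a basis of A as a k-vector space. -/

import Mathlib

open Polynomial

/-- Generators: `ι 0 = y`, `ι 1 = h`, `ι 2 = x`. Defining relations of the
quantum generalized Weyl algebra `A(a,q)`:
`xh = q·hx`, `hy = q·yh`, `yx = a(h)`, `xy = a(qh)`. -/
inductive gwaRel (k : Type*) [CommRing k] (q : k) (a : k[X]) :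
    FreeAlgebra k (Fin 3) → FreeAlgebra k (Fin 3) → Prop
  | xh : gwaRel k q a (FreeAlgebra.ι k 2 * FreeAlgebra.ι k 1)
      (q • (FreeAlgebra.ι k 1 * FreeAlgebra.ι k 2))
  | hy : gwaRel k q a (FreeAlgebra.ι k 1 * FreeAlgebra.ι k 0)
      (q • (FreeAlgebra.ι k 0 * FreeAlgebra.ι k 1))
  | yx : gwaRel k q a (FreeAlgebra.ι k 0 * FreeAlgebra.ι k 2)
      (aeval (FreeAlgebra.ι k 1) a)
  | xy : gwaRel k q a (FreeAlgebra.ι k 2 * FreeAlgebra.ι k 0)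
      (aeval (q • FreeAlgebra.ι k 1) a)

/-- The quantum generalized Weyl algebra `A(a,q)`. -/
abbrev GWA (k : Type*) [CommRing k] (q : k) (a : k[X]) := RingQuot (gwaRel k q a)

/-- `y ∈ A(a,q)`. -/
noncomputable def GWA.y (k : Type*) [CommRing k] (q : k) (a : k[X]) : GWA k q a :=
  RingQuot.mkAlgHom k (gwaRel k q a) (FreeAlgebra.ι k 0)

/-- `h ∈ A(a,q)`. -/
noncomputable def GWA.h (k : Type*) [CommRing k] (q : k) (a : k[X]) : GWA k q a :=
  RingQuot.mkAlgHom k (gwaRel k q a) (FreeAlgebra.ι k 1)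

/-- `x ∈ A(a,q)`. -/
noncomputable def GWA.x (k : Type*) [CommRing k] (q : k) (a : k[X]) : GWA k q a :=
  RingQuot.mkAlgHom k (gwaRel k q a) (FreeAlgebra.ι k 2)

/-!
The monomials span `A`: their span contains `1` and is stable under left multiplication by `y`,
`h` and `x`, since the relations `h y = q y h`, `x h = q h x`, `y x = a(h)`, `x y = a(q h)` rewrite
the product of a generator and a monomial as a combination of monomials (dividing by powers of `q`).

For independence, let `A` act on `⨁_{n ∈ ℤ} k[X]`: `x` shifts summand `n` to `n + 1`, `h`
multiplies summand `n` by `q⁻ⁿ X`, and `y = a(h) x⁻¹`. Then `y x = a(h)` holds on the nose, and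
`x y = a(q h)` because conjugating by the shift turns `h` into `q h`. Applied to `1` in summand `0`,
the monomial `yⁱ hʲ` gives `cᵢ Xʲ` in summand `-i`, where `cᵢ = ∏_{l=1}^{i} a(qˡ X) ≠ 0`, and
`hʲ xᵐ⁺¹` gives a nonzero multiple of `Xʲ` in summand `m + 1`; vectors of this shape are
linearly independent.
-/

theorem mul_pow_eq_smul_of_mul_eq_smul {R A : Type*} [CommSemiring R] [Semiring A] [Algebra R A]
    {r : R} {b c : A} (h : b * c = r • (c * b)) (n : ℕ) : b * c ^ n = r ^ n • (c ^ n * b) := by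
  induction n with
  | zero => simp
  | succ n ih =>
    rw [pow_succ, ← mul_assoc, ih, smul_mul_assoc, mul_assoc, h, mul_smul_comm, smul_smul,
      ← mul_assoc, pow_succ]

theorem pow_mul_pow_eq_smul_of_mul_eq_smul {R A : Type*} [CommSemiring R] [Semiring A]
    [Algebra R A] {r : R} {b c : A} (h : b * c = r • (c * b)) (m n : ℕ) :
    b ^ m * c ^ n = r ^ (m * n) • (c ^ n * b ^ m) := by
  induction m with
  | zero => simp
  | succ m ih =>
    rw [pow_succ', mul_assoc, ih, mul_smul_comm, ← mul_assoc, mul_pow_eq_smul_of_mul_eq_smul h,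
      smul_mul_assoc, smul_smul, mul_assoc, ← pow_succ', ← pow_add, add_one_mul]

theorem Submodule.span_eq_top_of_one_mem_of_mul_mem {R A : Type*} [CommSemiring R] [Semiring A]
    [Algebra R A] {s t : Set A} (hs : Algebra.adjoin R s = ⊤) (h1 : 1 ∈ span R t)
    (hmul : ∀ g ∈ s, ∀ v ∈ t, g * v ∈ span R t) : span R t = ⊤ := by
  have hstable : ∀ g : A, ∀ v ∈ span R t, g * v ∈ span R t := by
    intro g
    induction (show g ∈ Algebra.adjoin R s from hs ▸ Algebra.mem_top) using
      Algebra.adjoin_induction with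
    | mem g hg =>
      intro v hv
      exact span_le.mpr (show t ⊆ (span R t).comap (LinearMap.mulLeft R g) from hmul g hg) hv
    | algebraMap r => intro v hv; simpa [Algebra.smul_def] using smul_mem _ r hv
    | add g g' _ _ hg hg' => intro v hv; simpa [add_mul] using add_mem (hg v hv) (hg' v hv)
    | mul g g' _ _ hg hg' => intro v hv; simpa [mul_assoc] using hg _ (hg' v hv)
  exact eq_top_iff'.mpr fun g => by simpa using hstable g 1 h1

theorem Polynomial.linearIndependent_mul_C_mul_X_pow {k : Type*} [Field k] {p : k[X]}
    (hp : p ≠ 0) {u : k} (hu : u ≠ 0) : LinearIndependent k fun j : ℕ => p * (C u * X) ^ j := by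
  have hX : LinearIndependent k fun j : ℕ => (X : k[X]) ^ j := by
    simpa [coe_basisMonomials, X_pow_eq_monomial] using (basisMonomials k).linearIndependent
  simpa [Function.comp_def, Units.smul_def, smul_eq_C_mul, mul_pow] using
    (hX.units_smul fun j => Units.mk0 u hu ^ j).map' (LinearMap.mulLeft k p)
      (LinearMap.ker_eq_bot.mpr fun _ _ => mul_left_cancel₀ hp)

namespace Finsupp

theorem linearIndependent_single_of_injective {R G ι κ M : Type*} [Ring R] [AddCommGroup M]
    [Module R M] {w : ι → G} (hw : w.Injective) {f : ι → κ → M}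
    (hf : ∀ i, LinearIndependent R (f i)) :
    LinearIndependent R fun x : ι × κ => single (w x.1) (f x.1 x.2) := by
  have hsigma := (linearIndependent_equiv (Equiv.sigmaEquivProd ι κ).symm).mpr
    (Finsupp.linearIndependent_single f hf)
  simpa [Function.comp_def] using hsigma.map' (lmapDomain M R w)
    (LinearMap.ker_eq_bot (f := lmapDomain M R w) |>.mpr (mapDomain_injective hw))

section Endomorphisms

variable {R A G : Type*} [CommSemiring R] [Semiring A] [Algebra R A]

instance : IsScalarTower R (G → A) (G →₀ A) :=
  ⟨fun r m f => by ext; simp [coe_pointwise_smul]⟩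

instance : SMulCommClass (G → A) R (G →₀ A) :=
  ⟨fun m r f => by ext; simp [coe_pointwise_smul]⟩

noncomputable def diagonalEnd : (G → A) →ₐ[R] Module.End R (G →₀ A) :=
  Algebra.lsmul R R (G →₀ A)

theorem diagonalEnd_single (m : G → A) (g : G) (b : A) :
    diagonalEnd (R := R) m (single g b) = single g (m g * b) := by
  classical
  ext g'
  simp only [diagonalEnd, Algebra.lsmul_coe, coe_pointwise_smul, single_apply, smul_eq_mul]
  split_ifs with hg <;> simp [hg]

theorem aeval_diagonalEnd (m : G → A) (p : R[X]) :
    aeval (diagonalEnd (R := R) m) p = diagonalEnd fun g => aeval (m g) p := by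
  rw [← aeval_pi_apply, aeval_algHom_apply]

variable [AddCommGroup G]

noncomputable def translateEnd (g : G) : Module.End R (G →₀ A) :=
  lmapDomain A R (· + g)

theorem translateEnd_single (g g' : G) (b : A) :
    translateEnd (R := R) g (single g' b) = single (g' + g) b := by
  simp [translateEnd]

theorem translateEnd_mul_translateEnd (g g' : G) :
    translateEnd (R := R) (A := A) g * translateEnd g' = translateEnd (g + g') :=
  lhom_ext fun n b => by simp [translateEnd_single, add_assoc, add_comm g']

theorem translateEnd_zero : translateEnd (R := R) (A := A) (0 : G) = 1 :=
  lhom_ext fun n b => by simp [translateEnd_single]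

theorem translateEnd_pow (g : G) (n : ℕ) :
    translateEnd (R := R) (A := A) g ^ n = translateEnd (n • g) := by
  induction n with
  | zero => simp [translateEnd_zero]
  | succ n ih => rw [pow_succ, ih, translateEnd_mul_translateEnd, succ_nsmul]

theorem translateEnd_mul_diagonalEnd (g : G) (m : G → A) :
    translateEnd (R := R) g * diagonalEnd m = diagonalEnd (fun n => m (n - g)) * translateEnd g :=
  lhom_ext fun n b => by
    rw [Module.End.mul_apply, Module.End.mul_apply, diagonalEnd_single, translateEnd_single,
      translateEnd_single, diagonalEnd_single, add_sub_cancel_right]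

end Endomorphisms

end Finsupp

namespace GWA

section Relations

variable (k : Type*) [CommRing k] (q : k) (a : k[X])

local notation "𝐲" => GWA.y k q a
local notation "𝐡" => GWA.h k q a
local notation "𝐱" => GWA.x k q a

theorem x_mul_h : 𝐱 * 𝐡 = q • (𝐡 * 𝐱) := by
  simpa only [GWA.h, GWA.x, map_mul, map_smul] using
    RingQuot.mkAlgHom_rel k (gwaRel.xh (q := q) (a := a))

theorem h_mul_y : 𝐡 * 𝐲 = q • (𝐲 * 𝐡) := by
  simpa only [GWA.y, GWA.h, map_mul, map_smul] using
    RingQuot.mkAlgHom_rel k (gwaRel.hy (q := q) (a := a))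

theorem y_mul_x : 𝐲 * 𝐱 = aeval 𝐡 a := by
  simpa only [GWA.y, GWA.h, GWA.x, map_mul, ← aeval_algHom_apply] using
    RingQuot.mkAlgHom_rel k (gwaRel.yx (q := q) (a := a))

theorem x_mul_y : 𝐱 * 𝐲 = aeval (q • 𝐡) a := by
  simpa only [GWA.y, GWA.h, GWA.x, map_mul, ← aeval_algHom_apply, map_smul] using
    RingQuot.mkAlgHom_rel k (gwaRel.xy (q := q) (a := a))

theorem x_mul_h_pow (j : ℕ) : 𝐱 * 𝐡 ^ j = q ^ j • (𝐡 ^ j * 𝐱) := by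
  simpa using pow_mul_pow_eq_smul_of_mul_eq_smul (x_mul_h k q a) 1 j

theorem adjoin_y_h_x : Algebra.adjoin k {𝐲, 𝐡, 𝐱} = ⊤ := by
  have hrange : Set.range (fun i => RingQuot.mkAlgHom k (gwaRel k q a) (FreeAlgebra.ι k i)) =
      {𝐲, 𝐡, 𝐱} := by
    ext g
    simp [Fin.exists_fin_succ, GWA.y, GWA.h, GWA.x, eq_comm]
  rw [← hrange, Set.range_comp', ← AlgHom.map_adjoin, FreeAlgebra.adjoin_range_ι,
    Algebra.map_top, AlgHom.range_eq_top]
  exact RingQuot.mkAlgHom_surjective k _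

noncomputable def monomial : (ℕ × ℕ) ⊕ (ℕ × ℕ) → GWA k q a :=
  Sum.elim (fun ij => 𝐲 ^ ij.1 * 𝐡 ^ ij.2) (fun jm => 𝐡 ^ jm.1 * 𝐱 ^ (jm.2 + 1))

@[simp] theorem monomial_inl (i j : ℕ) : monomial k q a (.inl (i, j)) = 𝐲 ^ i * 𝐡 ^ j := rfl

@[simp] theorem monomial_inr (j m : ℕ) : monomial k q a (.inr (j, m)) = 𝐡 ^ j * 𝐱 ^ (m + 1) :=
  rfl

end Relations

section Spanning

variable (k : Type*) [CommRing k] (q : k) (a : k[X])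

local notation "𝐲" => GWA.y k q a
local notation "𝐡" => GWA.h k q a
local notation "𝐱" => GWA.x k q a
local notation "𝓢" => Submodule.span k (Set.range (monomial k q a))

theorem y_pow_mul_h_pow_mem (i j : ℕ) : 𝐲 ^ i * 𝐡 ^ j ∈ 𝓢 :=
  Submodule.subset_span ⟨.inl (i, j), rfl⟩

theorem h_pow_mul_x_pow_succ_mem (j m : ℕ) : 𝐡 ^ j * 𝐱 ^ (m + 1) ∈ 𝓢 :=
  Submodule.subset_span ⟨.inr (j, m), rfl⟩

theorem h_pow_mul_x_pow_mem (j : ℕ) : ∀ m : ℕ, 𝐡 ^ j * 𝐱 ^ m ∈ 𝓢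
  | 0 => by simpa using y_pow_mul_h_pow_mem k q a 0 j
  | m + 1 => h_pow_mul_x_pow_succ_mem k q a j m

theorem aeval_h_mul_x_pow_mem (p : k[X]) (m : ℕ) : aeval 𝐡 p * 𝐱 ^ m ∈ 𝓢 := by
  rw [aeval_eq_sum_range, Finset.sum_mul]
  refine Submodule.sum_mem _ fun t _ => ?_
  rw [smul_mul_assoc]
  exact Submodule.smul_mem _ _ (h_pow_mul_x_pow_mem k q a t m)

theorem aeval_h_mul_y_pow_mul_h_pow_mem (p : k[X]) (i j : ℕ) :
    aeval 𝐡 p * (𝐲 ^ i * 𝐡 ^ j) ∈ 𝓢 := by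
  rw [aeval_eq_sum_range, Finset.sum_mul]
  refine Submodule.sum_mem _ fun t _ => ?_
  rw [smul_mul_assoc, ← mul_assoc, pow_mul_pow_eq_smul_of_mul_eq_smul (h_mul_y k q a),
    smul_mul_assoc, mul_assoc, ← pow_add, smul_smul]
  exact Submodule.smul_mem _ _ (y_pow_mul_h_pow_mem k q a i (t + j))

end Spanning

section SpanningField

variable {k : Type*} [Field k] {q : k} (a : k[X])

local notation "𝐲" => GWA.y k q a
local notation "𝐡" => GWA.h k q a
local notation "𝐱" => GWA.x k q a
local notation "𝓢" => Submodule.span k (Set.range (monomial k q a))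

theorem y_mul_h_pow (hq0 : q ≠ 0) (j : ℕ) : 𝐲 * 𝐡 ^ j = (q ^ j)⁻¹ • (𝐡 ^ j * 𝐲) := by
  simpa [inv_smul_smul₀ (pow_ne_zero j hq0), eq_comm] using
    congrArg ((q ^ j)⁻¹ • ·) (pow_mul_pow_eq_smul_of_mul_eq_smul (h_mul_y k q a) j 1)

theorem y_mul_monomial_mem (hq0 : q ≠ 0) (s : (ℕ × ℕ) ⊕ (ℕ × ℕ)) :
    𝐲 * monomial k q a s ∈ 𝓢 := by
  rcases s with ⟨i, j⟩ | ⟨j, m⟩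
  · simpa [← mul_assoc, ← pow_succ'] using y_pow_mul_h_pow_mem k q a (i + 1) j
  · have : 𝐲 * (𝐡 ^ j * 𝐱 ^ (m + 1)) = (q ^ j)⁻¹ • (aeval 𝐡 (X ^ j * a) * 𝐱 ^ m) := by
      rw [← mul_assoc, y_mul_h_pow a hq0, smul_mul_assoc, pow_succ', mul_assoc, ← mul_assoc 𝐲,
        y_mul_x, map_mul, aeval_X_pow, mul_assoc]
    rw [monomial_inr, this]
    exact Submodule.smul_mem _ _ (aeval_h_mul_x_pow_mem k q a _ m)

theorem h_mul_monomial_mem (s : (ℕ × ℕ) ⊕ (ℕ × ℕ)) : 𝐡 * monomial k q a s ∈ 𝓢 := by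
  rcases s with ⟨i, j⟩ | ⟨j, m⟩
  · simpa using aeval_h_mul_y_pow_mul_h_pow_mem k q a X i j
  · simpa [← mul_assoc, ← pow_succ'] using h_pow_mul_x_pow_succ_mem k q a (j + 1) m

theorem x_mul_monomial_mem (s : (ℕ × ℕ) ⊕ (ℕ × ℕ)) : 𝐱 * monomial k q a s ∈ 𝓢 := by
  rcases s with ⟨_ | i, j⟩ | ⟨j, m⟩
  · rw [monomial_inl, pow_zero, one_mul, x_mul_h_pow k q a, ← pow_one 𝐱]
    exact Submodule.smul_mem _ _ (h_pow_mul_x_pow_mem k q a j 1)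
  · have : aeval (q • 𝐡) a = aeval 𝐡 (a.comp (C q * X)) := by
      rw [aeval_comp, map_mul, aeval_C, aeval_X, Algebra.smul_def]
    rw [monomial_inl, pow_succ', mul_assoc, ← mul_assoc 𝐱, x_mul_y, this]
    exact aeval_h_mul_y_pow_mul_h_pow_mem k q a _ i j
  · rw [monomial_inr, ← mul_assoc, x_mul_h_pow k q a, smul_mul_assoc, mul_assoc, ← pow_succ']
    exact Submodule.smul_mem _ _ (h_pow_mul_x_pow_succ_mem k q a j (m + 1))

theorem span_monomial (hq0 : q ≠ 0) : 𝓢 = ⊤ := by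
  refine Submodule.span_eq_top_of_one_mem_of_mul_mem (adjoin_y_h_x k q a)
    (by simpa using y_pow_mul_h_pow_mem k q a 0 0) ?_
  rintro g hg _ ⟨s, rfl⟩
  rcases hg with rfl | rfl | rfl
  exacts [y_mul_monomial_mem a hq0 s, h_mul_monomial_mem a s, x_mul_monomial_mem a s]

end SpanningField

open Finsupp

section Representation

variable {k : Type*} [Field k] (q : k) (a : k[X])

noncomputable def hWeight (n : ℤ) : k[X] := C (q ^ (-n)) * X

noncomputable def hRep : Module.End k (ℤ →₀ k[X]) := diagonalEnd (hWeight q)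

noncomputable def xRep : Module.End k (ℤ →₀ k[X]) := translateEnd 1

noncomputable def yRep : Module.End k (ℤ →₀ k[X]) := aeval (hRep q) a * translateEnd (-1)

noncomputable def repGens : Fin 3 → Module.End k (ℤ →₀ k[X]) := ![yRep q a, hRep q, xRep]

variable {q}

theorem hWeight_sub_one (hq0 : q ≠ 0) (n : ℤ) : hWeight q (n - 1) = q • hWeight q n := by
  rw [hWeight, hWeight, smul_eq_C_mul, ← mul_assoc, ← C_mul, neg_sub, sub_eq_add_neg,
    zpow_add₀ hq0, zpow_one]

theorem xRep_mul_hRep (hq0 : q ≠ 0) : xRep * hRep q = q • (hRep q * xRep) := by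
  rw [xRep, hRep, translateEnd_mul_diagonalEnd, ← smul_mul_assoc, ← map_smul]
  congr 2
  exact funext (hWeight_sub_one hq0)

theorem hRep_mul_yRep (hq0 : q ≠ 0) : hRep q * yRep q a = q • (yRep q a * hRep q) := by
  rw [yRep, hRep, aeval_diagonalEnd, mul_assoc _ (translateEnd (-1)),
    translateEnd_mul_diagonalEnd, ← mul_assoc, ← mul_assoc, ← map_mul, ← map_mul,
    ← smul_mul_assoc, ← map_smul]
  congr 2
  funext n
  have hn := hWeight_sub_one hq0 (n + 1)
  rw [add_sub_cancel_right] at hn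
  simp [hn, sub_neg_eq_add, mul_comm]

theorem yRep_mul_xRep : yRep q a * xRep = aeval (hRep q) a := by
  rw [yRep, xRep, mul_assoc, translateEnd_mul_translateEnd, neg_add_cancel, translateEnd_zero,
    mul_one]

theorem xRep_mul_yRep (hq0 : q ≠ 0) : xRep * yRep q a = aeval (q • hRep q) a := by
  rw [yRep, xRep, hRep, ← map_smul, aeval_diagonalEnd, aeval_diagonalEnd, ← mul_assoc,
    translateEnd_mul_diagonalEnd, mul_assoc, translateEnd_mul_translateEnd, add_neg_cancel,
    translateEnd_zero, mul_one]
  congr 1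
  funext n
  rw [hWeight_sub_one hq0, Pi.smul_apply]

theorem lift_repGens_eq_of_gwaRel (hq0 : q ≠ 0) ⦃u v : FreeAlgebra k (Fin 3)⦄
    (huv : gwaRel k q a u v) :
    FreeAlgebra.lift k (repGens q a) u = FreeAlgebra.lift k (repGens q a) v := by
  induction huv <;> simp [repGens, ← aeval_algHom_apply, xRep_mul_hRep hq0, hRep_mul_yRep a hq0,
    yRep_mul_xRep, xRep_mul_yRep a hq0]

noncomputable def rep (hq0 : q ≠ 0) : GWA k q a →ₐ[k] Module.End k (ℤ →₀ k[X]) :=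
  RingQuot.liftAlgHom k ⟨FreeAlgebra.lift k (repGens q a), lift_repGens_eq_of_gwaRel a hq0⟩

variable (hq0 : q ≠ 0)

@[simp] theorem rep_y : rep a hq0 (GWA.y k q a) = yRep q a := by
  simp [rep, repGens, GWA.y]

@[simp] theorem rep_h : rep a hq0 (GWA.h k q a) = hRep q := by
  simp [rep, repGens, GWA.h]

@[simp] theorem rep_x : rep a hq0 (GWA.x k q a) = xRep := by
  simp [rep, repGens, GWA.x]

end Representation

section Independence

variable {k : Type*} [Field k] (q : k) (a : k[X])

noncomputable def yCoeff (i : ℕ) : k[X] := ∏ l ∈ Finset.range i, aeval (hWeight q (-(l + 1))) a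

theorem hRep_pow_single (j : ℕ) (n : ℤ) (f : k[X]) :
    (hRep q ^ j) (single n f) = single n (hWeight q n ^ j * f) := by
  rw [hRep, ← map_pow, diagonalEnd_single, Pi.pow_apply]

theorem yRep_single (n : ℤ) (f : k[X]) :
    yRep q a (single n f) = single (n - 1) (aeval (hWeight q (n - 1)) a * f) := by
  rw [yRep, hRep, aeval_diagonalEnd, Module.End.mul_apply, translateEnd_single,
    diagonalEnd_single, ← sub_eq_add_neg]

theorem yRep_pow_single_zero (i : ℕ) (f : k[X]) :
    (yRep q a ^ i) (single 0 f) = single (-(i : ℤ)) (yCoeff q a i * f) := by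
  induction i with
  | zero => simp [yCoeff]
  | succ i ih =>
    rw [pow_succ', Module.End.mul_apply, ih, yRep_single, yCoeff, yCoeff, Finset.prod_range_succ,
      show -(i : ℤ) - 1 = -((i + 1 : ℕ) : ℤ) by push_cast; ring]
    congr 1
    push_cast
    ring

theorem xRep_pow_single (m : ℕ) (n : ℤ) (f : k[X]) :
    (xRep ^ m : Module.End k (ℤ →₀ k[X])) (single n f) = single (n + m) f := by
  rw [xRep, translateEnd_pow, translateEnd_single, nsmul_one]

variable {q}

theorem yCoeff_ne_zero (hq0 : q ≠ 0) {a : k[X]} (ha : a ≠ 0) (i : ℕ) : yCoeff q a i ≠ 0 :=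
  Finset.prod_ne_zero_iff.mpr fun l _ => by
    rw [hWeight, ← comp_eq_aeval, Ne, comp_C_mul_X_eq_zero_iff
      (mem_nonZeroDivisors_of_ne_zero (zpow_ne_zero _ hq0))]
    exact ha

variable (hq0 : q ≠ 0)

theorem rep_monomial_inl_single_zero (i j : ℕ) :
    rep a hq0 (monomial k q a (.inl (i, j))) (single 0 1) =
      single (-(i : ℤ)) (yCoeff q a i * hWeight q 0 ^ j) := by
  simp [hRep_pow_single, yRep_pow_single_zero]

theorem rep_monomial_inr_single_zero (j m : ℕ) :
    rep a hq0 (monomial k q a (.inr (j, m))) (single 0 1) =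
      single ((m : ℤ) + 1) (hWeight q (m + 1) ^ j) := by
  simp [hRep_pow_single, xRep_pow_single]

end Independence

theorem linearIndependent_monomial {k : Type*} [Field k] {q : k} (hq0 : q ≠ 0) {a : k[X]}
    (ha : a ≠ 0) : LinearIndependent k (monomial k q a) := by
  let ev : GWA k q a →ₗ[k] ℤ →₀ k[X] :=
    LinearMap.applyₗ (single 0 1) ∘ₗ (rep a hq0).toLinearMap
  have hev : ev ∘ monomial k q a =
      Sum.elim (fun ij => single (-(ij.1 : ℤ)) (yCoeff q a ij.1 * hWeight q 0 ^ ij.2))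
        (fun jm => single ((jm.2 : ℤ) + 1) (hWeight q (jm.2 + 1) ^ jm.1)) := by
    funext s
    rcases s with ⟨i, j⟩ | ⟨j, m⟩
    · exact rep_monomial_inl_single_zero a hq0 i j
    · exact rep_monomial_inr_single_zero a hq0 j m
  refine LinearIndependent.of_comp ev ?_
  rw [hev]
  refine .sum_type ?_ ?_ ?_
  · exact linearIndependent_single_of_injective (w := fun i : ℕ => -(i : ℤ))
      (f := fun i j => yCoeff q a i * hWeight q 0 ^ j) (neg_injective.comp Nat.cast_injective)
      fun i => linearIndependent_mul_C_mul_X_pow (yCoeff_ne_zero hq0 ha i) (zpow_ne_zero _ hq0)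
  · refine (linearIndependent_single_of_injective (w := fun m : ℕ => (m : ℤ) + 1)
      (f := fun m j => hWeight q (m + 1) ^ j) (fun _ _ h => by simpa using h) fun m => ?_).comp
      Prod.swap Prod.swap_injective
    simpa only [one_mul, hWeight] using
      linearIndependent_mul_C_mul_X_pow (p := 1) one_ne_zero (zpow_ne_zero _ hq0)
  · refine (disjoint_supported_supported (Set.Iic_disjoint_Ioi (le_refl (0 : ℤ)))).mono
      (Submodule.span_le.mpr ?_) (Submodule.span_le.mpr ?_) <;> rintro _ ⟨s, rfl⟩
    · exact single_mem_supported k _ (show -(s.1 : ℤ) ∈ Set.Iic 0 by simp)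
    · exact single_mem_supported k _ (show (s.2 : ℤ) + 1 ∈ Set.Ioi 0 by simp)

end GWA

theorem gwa_basis (k : Type*) [Field k] (q : k)
    (hq0 : q ≠ 0) (a : k[X]) (hmonic : a.Monic) :
    ∃ B : Module.Basis ((ℕ × ℕ) ⊕ (ℕ × ℕ)) k (GWA k q a),
      (∀ i j : ℕ, B (Sum.inl (i, j)) = GWA.y k q a ^ i * GWA.h k q a ^ j) ∧
      (∀ j m : ℕ, B (Sum.inr (j, m)) = GWA.h k q a ^ j * GWA.x k q a ^ (m + 1)) :=
  ⟨.mk (GWA.linearIndependent_monomial hq0 hmonic.ne_zero) (GWA.span_monomial a hq0).ge,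
    fun i j => by simp, fun j m => by simp⟩
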